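/- Define rational numbers P_{k,j} := S_{k,j}(1)/g_j for integers k ≥ 0 and j ≥ 1, and set P_{k,0} := 0. Then for all k ≥ 0 and j ≥ 1 the recurrence P_{k+1,j} = j^2 (P_{k,j} − P_{k,j-1}) + j · P_{k,j-1} holds. -/

import Mathlib

/-- `S k j` is the sum `S_{k,j}(1) = ∑_{q=0}^{j-1} binom(2j, q) (j-q)^{2k+1}`. -/
def S (k j : ℕ) : ℕ :=
  ∑ q ∈ Finset.range j, Nat.choose (2 * j) q * (j - q) ^ (2 * k + 1)

/-- `g j = (j/(j-1)!) ∏_{q=1}^{j-1} (j+q)` as a rational number; `g 1 = 1`. -/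
def g (j : ℕ) : ℚ :=
  (j : ℚ) / (Nat.factorial (j - 1) : ℚ) * ∏ q ∈ Finset.Icc 1 (j - 1), ((j : ℚ) + (q : ℚ))

/-- `Pkj k j = S_{k,j}(1) / g_j` for `j ≥ 1`, and `Pkj k 0 = 0`. -/
def Pkj (k j : ℕ) : ℚ :=
  if j = 0 then 0 else (S k j : ℚ) / g j

open Nat

/-! Writing `j² - (j - q)² = q (2j - q)`, the identity
`q (2j - q) C(2j, q) = 2j (2j - 1) C(2j - 2, q - 1)` turns `S_{k+1,j}` into
`j² S_{k,j} - 2j (2j - 1) S_{k,j-1}`. The closed form `g_j = (2j - 1)! / ((j - 1)!)²`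
gives `(j - 1) g_j = 2 (2j - 1) g_{j-1}`, which converts the coefficient `2j (2j - 1) / g_j`
into `j (j - 1) / g_{j-1}`. -/

theorem Nat.succ_mul_sub_mul_choose_add_two (m i : ℕ) :
    (i + 1) * (m + 1 - i) * (m + 2).choose (i + 1) = (m + 2) * (m + 1) * m.choose i := by
  have h₁ : (m + 2) * (m + 1).choose i = (m + 2).choose (i + 1) * (i + 1) :=
    Nat.add_one_mul_choose_eq (m + 1) i
  have h₂ := Nat.choose_mul_succ_eq m i
  calc (i + 1) * (m + 1 - i) * (m + 2).choose (i + 1)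
      = (m + 1 - i) * ((m + 2).choose (i + 1) * (i + 1)) := by ring
    _ = (m + 2) * ((m + 1).choose i * (m + 1 - i)) := by rw [← h₁]; ring
    _ = (m + 2) * (m + 1) * m.choose i := by rw [← h₂]; ring

theorem S_zero_right (k : ℕ) : S k 0 = 0 := rfl

theorem S_succ_succ_add_mul (k n : ℕ) :
    S (k + 1) (n + 1) + (2 * n + 2) * (2 * n + 1) * S k n = (n + 1) ^ 2 * S k (n + 1) := by
  simp only [S, Finset.mul_sum]
  rw [Finset.sum_range_succ', Finset.sum_range_succ' _ n, add_right_comm,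
    ← Finset.sum_add_distrib]
  congr 1
  · refine Finset.sum_congr rfl fun i hi => ?_
    obtain ⟨d, rfl⟩ := Nat.exists_eq_add_of_le (Finset.mem_range.mp hi).le
    have key := Nat.succ_mul_sub_mul_choose_add_two (2 * (i + d)) i
    rw [show 2 * (i + d) + 1 - i = i + 2 * d + 1 by omega] at key
    rw [show i + d + 1 - (i + 1) = d by omega, show i + d - i = d by omega,
      show 2 * (i + d + 1) = 2 * (i + d) + 2 by ring, ← mul_assoc _ (Nat.choose _ _), ← key]
    ring
  · simp only [Nat.choose_zero_right, Nat.sub_zero]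
    ring

theorem prod_Icc_add_eq_ascFactorial (n : ℕ) :
    ∏ q ∈ Finset.Icc 1 n, (n + 1 + q) = (n + 2).ascFactorial n := by
  rw [← Finset.Ico_add_one_right_eq_Icc, Finset.prod_Ico_eq_prod_range,
    Nat.ascFactorial_eq_prod_range]
  exact Finset.prod_congr (by simp) fun i _ => by ring

theorem g_succ (n : ℕ) : g (n + 1) = ((2 * n + 1)! : ℚ) / (n ! : ℚ) ^ 2 := by
  have h := Nat.factorial_mul_ascFactorial (n + 1) n
  rw [← prod_Icc_add_eq_ascFactorial, show n + 1 + n = 2 * n + 1 by ring] at h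
  have hq : ((n + 1)! : ℚ) * ∏ q ∈ Finset.Icc 1 n, ((n + 1 : ℕ) + (q : ℚ)) = (2 * n + 1)! := by
    exact_mod_cast h
  rw [g, Nat.add_sub_cancel, ← hq, Nat.factorial_succ]
  push_cast
  field_simp

theorem g_zero : g 0 = 0 := by simp [g]

theorem natCast_mul_g_succ (n : ℕ) : (n : ℚ) * g (n + 1) = 2 * (2 * n + 1) * g n := by
  rcases n with _ | m
  · simp [g_zero]
  rw [g_succ, g_succ, show 2 * (m + 1) + 1 = 2 * m + 1 + 1 + 1 by ring, Nat.factorial_succ,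
    Nat.factorial_succ, Nat.factorial_succ m]
  push_cast
  field_simp
  ring

theorem g_succ_ne_zero (n : ℕ) : g (n + 1) ≠ 0 := by
  rw [g_succ]; positivity

theorem Pkj_eq_div (k j : ℕ) : Pkj k j = S k j / g j := by
  rcases j with _ | j <;> simp [Pkj, S_zero_right]

theorem natCast_mul_g_succ_mul_Pkj (k n : ℕ) :
    (n : ℚ) * g (n + 1) * Pkj k n = 2 * (2 * n + 1) * S k n := by
  rw [natCast_mul_g_succ, Pkj_eq_div]
  rcases n with _ | m
  · simp [S_zero_right]
  have := g_succ_ne_zero m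
  field_simp

theorem Pkj_recurrence (k j : ℕ) (hj : 1 ≤ j) :
    Pkj (k + 1) j = (j : ℚ) ^ 2 * (Pkj k j - Pkj k (j - 1)) + (j : ℚ) * Pkj k (j - 1) := by
  obtain ⟨n, rfl⟩ := Nat.exists_eq_add_of_le' hj
  have hS : (S (k + 1) (n + 1) : ℚ) + (2 * n + 2) * (2 * n + 1) * S k n
      = (n + 1) ^ 2 * S k (n + 1) := by exact_mod_cast S_succ_succ_add_mul k n
  have hP := natCast_mul_g_succ_mul_Pkj k n
  have hg := g_succ_ne_zero n
  rw [Nat.add_sub_cancel, Pkj_eq_div (k + 1), Pkj_eq_div k (n + 1)]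
  push_cast
  field_simp
  linear_combination hS + (n + 1) * hP
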